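/- arXiv:1612.00909 — 2 statements merged into one kernel-verified Lean document; each statement's English description precedes it below -/
import Mathlib

section
/- Let g : [0, T] → ℂ be a function of bounded total variation V(g) with g(0) = 0 and T > 0. Then for any complex number ξ with Re(ξ) ≥ 0 and |Im(ξ)| ≥ 1, the truncated Laplace transform satisfies |∫₀^T e^{−ξt} g(t) dt| ≤ (V(g) + |g(T)|·e^{−Re(ξ)T} + V(g))/|Im(ξ)|, i.e. it is bounded by a constant multiple of V(g)/(1 + |Im(ξ)|). -/
/-!
Write `F x = ∫ y in x..b, f y`. Cut `[a, b]` into `n` equal pieces `[tᵢ, tᵢ₊₁]` and freeze `g` at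
the left endpoint of each piece; this costs `O(V(g) / n)`. Summation by parts turns the frozen sum
`∑ g(tᵢ) (F tᵢ - F tᵢ₊₁)` into `g(a) F(a) + ∑ F(tᵢ₊₁) (g tᵢ₊₁ - g tᵢ)` (as `F b = 0`), which is at
most `sup ‖F‖ · (‖g a‖ + V(g))`. For `f t = e^{-ξt}` with `Re ξ ≥ 0` one has
`F x = (e^{-ξx} - e^{-ξT}) / ξ`, so `sup ‖F‖ ≤ 2 / |ξ| ≤ 2 / |Im ξ|`, and the integral is at most
`2 V(g) / |Im ξ|`.
-/

open MeasureTheory Set Filter Topology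

section Measurability

variable {α : Type*} [LinearOrder α] [TopologicalSpace α] [OrderClosedTopology α]
  [MeasurableSpace α] [BorelSpace α] {μ : Measure α} {s : Set α}

theorem LocallyBoundedVariationOn.aemeasurable_restrict_real {f : α → ℝ}
    (hf : LocallyBoundedVariationOn f s) (hs : MeasurableSet s) :
    AEMeasurable f (μ.restrict s) := by
  obtain ⟨p, q, hp, hq, rfl⟩ := hf.exists_monotoneOn_sub_monotoneOn
  exact (aemeasurable_restrict_of_monotoneOn hs hp).sub (aemeasurable_restrict_of_monotoneOn hs hq)

theorem LocallyBoundedVariationOn.aemeasurable_restrict {𝕜 : Type*} [RCLike 𝕜] {f : α → 𝕜}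
    (hf : LocallyBoundedVariationOn f s) (hs : MeasurableSet s) :
    AEMeasurable f (μ.restrict s) :=
  aemeasurable_of_re_im
    ((RCLike.reCLM.lipschitz.comp_locallyBoundedVariationOn hf).aemeasurable_restrict_real hs :)
    ((RCLike.imCLM.lipschitz.comp_locallyBoundedVariationOn hf).aemeasurable_restrict_real hs :)

end Measurability

theorem Finset.sum_range_sub_smul_eq {R M : Type*} [Ring R] [AddCommGroup M] [Module R M]
    (c : ℕ → R) (v : ℕ → M) (n : ℕ) :
    ∑ i ∈ Finset.range n, (c i - c (i + 1)) • v i =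
      c 0 • v 0 - c n • v n + ∑ i ∈ Finset.range n, c (i + 1) • (v (i + 1) - v i) := by
  induction n with
  | zero => simp
  | succ n ih =>
    rw [Finset.sum_range_succ, ih, Finset.sum_range_succ]
    simp only [sub_smul, smul_sub]
    abel

section BoundedVariation

variable {𝕜 E : Type*} [RCLike 𝕜] [NormedAddCommGroup E] [NormedSpace ℝ E] [NormedSpace 𝕜 E]
  [CompleteSpace E] {f : ℝ → 𝕜} {g : ℝ → E}

theorem norm_intervalIntegral_smul_sub_smul_le {x y C : ℝ} (hxy : x ≤ y)
    (hf : IntervalIntegrable f volume x y)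
    (hfg : IntervalIntegrable (fun s ↦ f s • g s) volume x y)
    (hfC : ∀ s ∈ Icc x y, ‖f s‖ ≤ C) (hg : BoundedVariationOn g (Icc x y)) :
    ‖(∫ s in x..y, f s • g s) - (∫ s in x..y, f s) • g x‖ ≤
      C * (eVariationOn g (Icc x y)).toReal * (y - x) := by
  rw [← intervalIntegral.integral_smul_const,
    ← intervalIntegral.integral_sub hfg ⟨hf.1.smul_const _, hf.2.smul_const _⟩]
  have hC : 0 ≤ C := (norm_nonneg _).trans (hfC x (left_mem_Icc.2 hxy))
  refine (intervalIntegral.norm_integral_le_of_norm_le_const fun s hs ↦ ?_).trans_eq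
    (by rw [abs_of_nonneg (sub_nonneg.2 hxy)])
  rw [uIoc_of_le hxy] at hs
  have hs' : s ∈ Icc x y := Ioc_subset_Icc_self hs
  rw [← smul_sub, norm_smul, ← dist_eq_norm]
  exact mul_le_mul (hfC s hs') (hg.dist_le hs' (left_mem_Icc.2 hxy)) dist_nonneg hC

theorem norm_intervalIntegral_smul_le_of_partition {a b C M δ : ℝ} {t : ℕ → ℝ} {n : ℕ}
    (ht : Monotone t) (ht0 : t 0 = a) (htn : t n = b) (hδ : ∀ i < n, t (i + 1) - t i ≤ δ)
    (hf : IntervalIntegrable f volume a b)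
    (hfg : IntervalIntegrable (fun x ↦ f x • g x) volume a b)
    (hfC : ∀ x ∈ Icc a b, ‖f x‖ ≤ C) (hg : BoundedVariationOn g (Icc a b))
    (hM : ∀ x ∈ Icc a b, ‖∫ y in x..b, f y‖ ≤ M) :
    ‖∫ x in a..b, f x • g x‖ ≤
      M * (‖g a‖ + (eVariationOn g (Icc a b)).toReal) +
        C * (eVariationOn g (Icc a b)).toReal * δ := by
  set F : ℝ → 𝕜 := fun x ↦ ∫ y in x..b, f y
  set V : ℕ → ℝ := fun i ↦ (eVariationOn g (Icc (t i) (t (i + 1)))).toReal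
  set R : ℕ → E := fun i ↦
    (∫ x in t i..t (i + 1), f x • g x) - (∫ x in t i..t (i + 1), f x) • g (t i)
  have hab : a ≤ b := ht0 ▸ htn ▸ ht (Nat.zero_le n)
  have hmem : ∀ i ≤ n, t i ∈ Icc a b := fun i hi ↦ ⟨ht0 ▸ ht i.zero_le, htn ▸ ht hi⟩
  have hsub : ∀ i < n, Icc (t i) (t (i + 1)) ⊆ Icc a b := fun i hi ↦
    Icc_subset_Icc (hmem i hi.le).1 (hmem (i + 1) hi).2
  have huIcc : ∀ i j, i ≤ n → j ≤ n → uIcc (t i) (t j) ⊆ uIcc a b := fun i j hi hj ↦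
    uIcc_subset_uIcc (Icc_subset_uIcc (hmem i hi)) (Icc_subset_uIcc (hmem j hj))
  have hg_piece : ∀ i < n, BoundedVariationOn g (Icc (t i) (t (i + 1))) := fun i hi ↦
    hg.mono (hsub i hi)
  have hV_sum : ∑ i ∈ Finset.range n, V i = (eVariationOn g (Icc a b)).toReal := by
    rw [← ENNReal.toReal_sum fun i hi ↦ hg_piece i (Finset.mem_range.1 hi),
      eVariationOn.sum' g ht, ht0, htn]
  have hF_sub : ∀ i < n, ∫ x in t i..t (i + 1), f x = F (t i) - F (t (i + 1)) := fun i hi ↦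
    eq_sub_of_add_eq (intervalIntegral.integral_add_adjacent_intervals
      (hf.mono_set (huIcc i (i + 1) hi.le hi)) (hf.mono_set (htn ▸ huIcc (i + 1) n hi le_rfl)))
  have hsplit : ∫ x in a..b, f x • g x =
      F a • g a + ∑ i ∈ Finset.range n, F (t (i + 1)) • (g (t (i + 1)) - g (t i)) +
        ∑ i ∈ Finset.range n, R i := by
    have h := intervalIntegral.sum_integral_adjacent_intervals fun i (hi : i < n) ↦
      hfg.mono_set (huIcc i (i + 1) hi.le hi)
    rw [ht0, htn] at h
    have hF_b : F b = 0 := intervalIntegral.integral_same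
    have habel := Finset.sum_range_sub_smul_eq (fun i ↦ F (t i)) (fun i ↦ g (t i)) n
    rw [ht0, htn, hF_b, zero_smul, sub_zero] at habel
    rw [← h, ← habel, ← Finset.sum_add_distrib]
    refine Finset.sum_congr rfl fun i hi ↦ ?_
    rw [← hF_sub i (Finset.mem_range.1 hi), add_sub_cancel]
  have hC : 0 ≤ C := (norm_nonneg _).trans (hfC a (left_mem_Icc.2 hab))
  have hR : ∀ i < n, ‖R i‖ ≤ C * V i * δ := fun i hi ↦
    (norm_intervalIntegral_smul_sub_smul_le (ht i.le_succ)
      (hf.mono_set (huIcc i (i + 1) hi.le hi)) (hfg.mono_set (huIcc i (i + 1) hi.le hi))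
      (fun x hx ↦ hfC x (hsub i hi hx)) (hg_piece i hi)).trans
      (mul_le_mul_of_nonneg_left (hδ i hi) (mul_nonneg hC ENNReal.toReal_nonneg))
  have hAbel : ∀ i < n, ‖F (t (i + 1)) • (g (t (i + 1)) - g (t i))‖ ≤ M * V i := fun i hi ↦ by
    rw [norm_smul, ← dist_eq_norm]
    exact mul_le_mul (hM _ (hmem (i + 1) hi))
      ((hg_piece i hi).dist_le (right_mem_Icc.2 (ht i.le_succ)) (left_mem_Icc.2 (ht i.le_succ)))
      dist_nonneg ((norm_nonneg _).trans (hM _ (hmem (i + 1) hi)))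
  calc ‖∫ x in a..b, f x • g x‖
      ≤ ‖F a‖ * ‖g a‖ + ∑ i ∈ Finset.range n, ‖F (t (i + 1)) • (g (t (i + 1)) - g (t i))‖ +
          ∑ i ∈ Finset.range n, ‖R i‖ := by
        rw [hsplit, ← norm_smul]
        exact (norm_add₃_le).trans (add_le_add_three le_rfl (norm_sum_le _ _) (norm_sum_le _ _))
    _ ≤ M * ‖g a‖ + ∑ i ∈ Finset.range n, M * V i + ∑ i ∈ Finset.range n, C * V i * δ := by
        gcongr with i hi i hi
        · exact hM a (left_mem_Icc.2 hab)
        · exact hAbel i (Finset.mem_range.1 hi)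
        · exact hR i (Finset.mem_range.1 hi)
    _ = _ := by
        rw [← Finset.mul_sum, ← Finset.sum_mul, ← Finset.mul_sum, hV_sum]
        ring

theorem norm_intervalIntegral_smul_le_of_boundedVariationOn {a b M : ℝ} (hab : a ≤ b)
    (hf : ContinuousOn f (Icc a b)) (hg : BoundedVariationOn g (Icc a b))
    (hgm : AEStronglyMeasurable g (volume.restrict (Icc a b)))
    (hM : ∀ x ∈ Icc a b, ‖∫ y in x..b, f y‖ ≤ M) :
    ‖∫ x in a..b, f x • g x‖ ≤ M * (‖g a‖ + (eVariationOn g (Icc a b)).toReal) := by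
  set V := (eVariationOn g (Icc a b)).toReal
  obtain ⟨C, hC⟩ := isCompact_Icc.exists_bound_of_continuousOn hf
  have hg_bdd : ∀ x ∈ Icc a b, ‖g x‖ ≤ ‖g a‖ + V := fun x hx ↦
    calc ‖g x‖ ≤ ‖g a‖ + dist (g x) (g a) := by rw [dist_eq_norm]; exact norm_le_insert' _ _
      _ ≤ ‖g a‖ + V := by gcongr; exact hg.dist_le hx (left_mem_Icc.2 hab)
  have hfg : IntegrableOn (fun x ↦ f x • g x) (Icc a b) :=
    hf.integrableOn_Icc.smul_bdd _ hgm
      ((ae_restrict_iff' measurableSet_Icc).2 (Eventually.of_forall hg_bdd))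
  have hstep : 0 ≤ b - a := sub_nonneg.2 hab
  have hpartition : ∀ n : ℕ, 0 < n → ‖∫ x in a..b, f x • g x‖ ≤
      M * (‖g a‖ + V) + C * V * ((b - a) / n) := fun n hn ↦
    norm_intervalIntegral_smul_le_of_partition (t := fun i ↦ a + i * ((b - a) / n))
      (fun i j hij ↦ add_le_add_right
        (mul_le_mul_of_nonneg_right (Nat.cast_le.2 hij) (div_nonneg hstep n.cast_nonneg)) a)
      (by simp) (by field_simp; ring) (fun i _ ↦ le_of_eq (by push_cast; ring))
      ((intervalIntegrable_iff_integrableOn_Icc_of_le hab).2 hf.integrableOn_Icc)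
      ((intervalIntegrable_iff_integrableOn_Icc_of_le hab).2 hfg) hC hg hM
  have hlim : Tendsto (fun n : ℕ ↦ M * (‖g a‖ + V) + C * V * ((b - a) / n)) atTop
      (𝓝 (M * (‖g a‖ + V))) := by
    simpa using tendsto_const_nhds.add
      ((tendsto_const_div_atTop_nhds_zero_nat (b - a)).const_mul (C * V))
  exact ge_of_tendsto hlim (eventually_atTop.2 ⟨1, hpartition⟩)

end BoundedVariation

theorem Complex.norm_exp_neg_mul_ofReal_le_one {ξ : ℂ} {x : ℝ} (hξ : 0 ≤ ξ.re) (hx : 0 ≤ x) :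
    ‖Complex.exp (-ξ * x)‖ ≤ 1 := by
  rw [Complex.norm_exp, Real.exp_le_one_iff]
  simpa [Complex.mul_re] using mul_nonneg hξ hx

theorem Complex.norm_integral_exp_neg_mul_le {ξ : ℂ} (hξ : ξ ≠ 0) (hre : 0 ≤ ξ.re) {s t : ℝ}
    (hs : 0 ≤ s) (ht : 0 ≤ t) : ‖∫ x in s..t, Complex.exp (-ξ * x)‖ ≤ 2 / ‖ξ‖ := by
  rw [integral_exp_mul_complex (neg_ne_zero.2 hξ), norm_div, norm_neg]
  gcongr
  calc ‖Complex.exp (-ξ * t) - Complex.exp (-ξ * s)‖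
      ≤ ‖Complex.exp (-ξ * t)‖ + ‖Complex.exp (-ξ * s)‖ := norm_sub_le _ _
    _ ≤ 1 + 1 := add_le_add (norm_exp_neg_mul_ofReal_le_one hre ht)
        (norm_exp_neg_mul_ofReal_le_one hre hs)
    _ = 2 := one_add_one_eq_two

theorem stmt4 (T : ℝ) (hT : 0 < T) (g : ℝ → ℂ) (hg0 : g 0 = 0)
    (Vg : ℝ) (hVg0 : 0 ≤ Vg)
    (hVg : eVariationOn g (Set.Icc 0 T) = ENNReal.ofReal Vg)
    (ξ : ℂ) (hre : 0 ≤ ξ.re) (him : 1 ≤ |ξ.im|) :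
    ‖∫ t in (0:ℝ)..T, Complex.exp (-ξ * t) * g t‖ ≤
      (Vg + ‖g T‖ * Real.exp (-ξ.re * T) + Vg) / |ξ.im| := by
  have hξ : ξ ≠ 0 := by rintro rfl; norm_num at him
  have hg : BoundedVariationOn g (Icc 0 T) := by
    rw [BoundedVariationOn, hVg]; exact ENNReal.ofReal_ne_top
  have hV : (eVariationOn g (Icc 0 T)).toReal = Vg := by rw [hVg, ENNReal.toReal_ofReal hVg0]
  have hbound := norm_intervalIntegral_smul_le_of_boundedVariationOn (M := 2 / ‖ξ‖) hT.le
    (f := fun x ↦ Complex.exp (-ξ * x)) (by fun_prop) hg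
    (hg.locallyBoundedVariationOn.aemeasurable_restrict measurableSet_Icc).aestronglyMeasurable
    (fun x hx ↦ Complex.norm_integral_exp_neg_mul_le hξ hre hx.1 hT.le)
  simp only [smul_eq_mul, hg0, norm_zero, zero_add, hV] at hbound
  calc ‖∫ t in (0:ℝ)..T, Complex.exp (-ξ * t) * g t‖ ≤ 2 / ‖ξ‖ * Vg := hbound
    _ ≤ 2 / |ξ.im| * Vg := by
        have : 0 < |ξ.im| := zero_lt_one.trans_le him
        gcongr
        exact Complex.abs_im_le_norm ξ
    _ ≤ (Vg + ‖g T‖ * Real.exp (-ξ.re * T) + Vg) / |ξ.im| := by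
        rw [div_mul_eq_mul_div]
        gcongr
        linarith [mul_nonneg (norm_nonneg (g T)) (Real.exp_pos (-ξ.re * T)).le]
end

section
/- Let f : X → ℝ and g : X → ℝ be bounded functions on a probability space (X, μ) and for ε > 0 let f_ε, g_ε be functions with ‖f − f_ε‖_∞ ≤ C₁ ε^θ, ‖g − g_ε‖_∞ ≤ C₁ ε^θ, ‖f_ε‖_* ≤ C₂ ε^{−k}, ‖g_ε‖_* ≤ C₂ ε^{−k} for constants C₁, C₂, θ, k > 0. Suppose |∫ f_ε (g_ε ∘ T_t) dμ − (∫f_ε)(∫g_ε)| ≤ C₃ ‖f_ε‖_* ‖g_ε‖_* e^{−ηt} for all t > 0 and all ε. Then there exist η' > 0 (depending on η, θ, k) and C > 0 such that |∫ f (g ∘ T_t) dμ − (∫f)(∫g)| ≤ C e^{−η' t} for all t > 0; explicitly, η' = ηθ/(2k + θ) works, obtained by choosing ε = e^{−ηt/(2k+θ)}. -/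
open MeasureTheory

private lemma integrable_of_bdd' {X : Type*} [MeasurableSpace X] {μ : Measure X}
    [IsFiniteMeasure μ] {u : X → ℝ} (hu : Measurable u) {c : ℝ} (hb : ∀ x, |u x| ≤ c) :
    Integrable u μ := by
  refine Integrable.mono' (integrable_const c) hu.aestronglyMeasurable ?_
  filter_upwards with x using (by simpa using hb x)

private lemma abs_integral_le' {X : Type*} [MeasurableSpace X] {μ : Measure X}
    [IsProbabilityMeasure μ] {u : X → ℝ} {c : ℝ} (hb : ∀ x, |u x| ≤ c) :
    |∫ x, u x ∂μ| ≤ c := by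
  have := norm_integral_le_of_norm_le_const (μ := μ) (f := u) (C := c)
    (by filter_upwards with x using (by simpa using hb x))
  simpa using this

private lemma abs_integral_sub_le' {X : Type*} [MeasurableSpace X] {μ : Measure X}
    [IsProbabilityMeasure μ] {u v : X → ℝ} (hu : Integrable u μ) (hv : Integrable v μ)
    {c : ℝ} (h : ∀ x, |u x - v x| ≤ c) :
    |(∫ x, u x ∂μ) - ∫ x, v x ∂μ| ≤ c := by
  rw [← integral_sub hu hv]
  exact abs_integral_le' h

theorem stmt11 {X : Type*} [MeasurableSpace X] (μ : MeasureTheory.Measure X)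
    [MeasureTheory.IsProbabilityMeasure μ]
    (T : ℝ → X → X) (hT : ∀ t, 0 ≤ t → MeasureTheory.MeasurePreserving (T t) μ μ)
    (f g : X → ℝ) (hfm : Measurable f) (hgm : Measurable g)
    (C₁ C₂ C₃ θ k η : ℝ) (hC₁ : 0 < C₁) (hC₂ : 0 < C₂) (hC₃ : 0 < C₃)
    (hθ : 0 < θ) (hk : 0 < k) (hη : 0 < η)
    (hfb : ∀ x, |f x| ≤ C₁) (hgb : ∀ x, |g x| ≤ C₁)
    (fa ga : ℝ → X → ℝ)
    (ham : ∀ ε ∈ Set.Ioo (0:ℝ) 1, Measurable (fa ε) ∧ Measurable (ga ε))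
    (Nstar : (X → ℝ) → ℝ)
    (happrox : ∀ ε ∈ Set.Ioo (0:ℝ) 1,
      (∀ x, |f x - fa ε x| ≤ C₁ * ε ^ θ) ∧ (∀ x, |g x - ga ε x| ≤ C₁ * ε ^ θ) ∧
      Nstar (fa ε) ≤ C₂ * ε ^ (-k) ∧ Nstar (ga ε) ≤ C₂ * ε ^ (-k) ∧
      (∀ x, |fa ε x| ≤ Nstar (fa ε)) ∧ (∀ x, |ga ε x| ≤ Nstar (ga ε)))
    (hmix : ∀ ε ∈ Set.Ioo (0:ℝ) 1, ∀ t : ℝ, 0 < t →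
      |(∫ x, fa ε x * ga ε (T t x) ∂μ) - (∫ x, fa ε x ∂μ) * (∫ x, ga ε x ∂μ)| ≤
        C₃ * Nstar (fa ε) * Nstar (ga ε) * Real.exp (-η * t)) :
    ∃ C : ℝ, 0 < C ∧ ∀ t : ℝ, 0 < t →
      |(∫ x, f x * g (T t x) ∂μ) - (∫ x, f x ∂μ) * (∫ x, g x ∂μ)| ≤
        C * Real.exp (-(η * θ / (2 * k + θ)) * t) := by
  have hXne : Nonempty X := by
    by_contra h
    rw [not_nonempty_iff] at h
    have h1 : μ Set.univ = 1 := measure_univ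
    rw [Set.univ_eq_empty_iff.mpr h, measure_empty] at h1
    exact zero_ne_one h1
  have hden : 0 < 2 * k + θ := by positivity
  refine ⟨C₃ * C₂ * C₂ + 6 * C₁ * C₁, by positivity, ?_⟩
  intro t ht
  set ε : ℝ := Real.exp (-η * t / (2 * k + θ)) with hεdef
  have hεpos : 0 < ε := Real.exp_pos _
  have hεlt : ε < 1 := by
    have : -η * t / (2 * k + θ) < 0 := div_neg_of_neg_of_pos (by nlinarith) hden
    calc ε < Real.exp 0 := Real.exp_lt_exp.mpr this
      _ = 1 := Real.exp_zero
  have hεIoo : ε ∈ Set.Ioo (0:ℝ) 1 := ⟨hεpos, hεlt⟩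
  obtain ⟨hf1, hg1, hf2, hg2, hf3, hg3⟩ := happrox ε hεIoo
  obtain ⟨hfam, hgam⟩ := ham ε hεIoo
  have hεθpos : (0:ℝ) < ε ^ θ := Real.rpow_pos_of_pos hεpos θ
  have hεθ1 : ε ^ θ ≤ 1 := Real.rpow_le_one hεpos.le hεlt.le hθ.le
  -- pointwise bounds for fa, ga
  have hfab : ∀ x, |fa ε x| ≤ 2 * C₁ := by
    intro x
    have h1 := abs_le.mp (hf1 x)
    have h2 := abs_le.mp (hfb x)
    have h3 : C₁ * ε ^ θ ≤ C₁ := by nlinarith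
    rw [abs_le]; constructor <;> linarith [h1.1, h1.2, h2.1, h2.2]
  have hgab : ∀ x, |ga ε x| ≤ 2 * C₁ := by
    intro x
    have h1 := abs_le.mp (hg1 x)
    have h2 := abs_le.mp (hgb x)
    have h3 : C₁ * ε ^ θ ≤ C₁ := by nlinarith
    rw [abs_le]; constructor <;> linarith [h1.1, h1.2, h2.1, h2.2]
  have hTm : Measurable (T t) := (hT t ht.le).measurable
  -- integrability
  have int_f : Integrable f μ := integrable_of_bdd' hfm hfb
  have int_g : Integrable g μ := integrable_of_bdd' hgm hgb
  have int_fa : Integrable (fa ε) μ := integrable_of_bdd' hfam hfab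
  have int_ga : Integrable (ga ε) μ := integrable_of_bdd' hgam hgab
  have int_fg : Integrable (fun x => f x * g (T t x)) μ := by
    refine integrable_of_bdd' (hfm.mul (hgm.comp hTm)) (c := C₁ * C₁) ?_
    intro x
    rw [abs_mul]
    exact mul_le_mul (hfb x) (hgb _) (abs_nonneg _) hC₁.le
  have int_faga : Integrable (fun x => fa ε x * ga ε (T t x)) μ := by
    refine integrable_of_bdd' (hfam.mul (hgam.comp hTm)) (c := (2*C₁) * (2*C₁)) ?_
    intro x
    rw [abs_mul]
    exact mul_le_mul (hfab x) (hgab _) (abs_nonneg _) (by linarith)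
  -- exponent computations
  have hE1 : ε ^ θ = Real.exp (-(η * θ / (2 * k + θ)) * t) := by
    rw [hεdef, Real.rpow_def_of_pos (Real.exp_pos _), Real.log_exp]
    congr 1
    field_simp
  have hE2 : ε ^ (-k) * ε ^ (-k) * Real.exp (-η * t)
      = Real.exp (-(η * θ / (2 * k + θ)) * t) := by
    rw [hεdef, Real.rpow_def_of_pos (Real.exp_pos _), Real.log_exp,
      ← Real.exp_add, ← Real.exp_add]
    congr 1
    field_simp
    ring
  set E : ℝ := Real.exp (-(η * θ / (2 * k + θ)) * t) with hEdef
  -- term 1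
  have h1 : |(∫ x, f x * g (T t x) ∂μ) - ∫ x, fa ε x * ga ε (T t x) ∂μ|
      ≤ 3 * (C₁ * C₁) * ε ^ θ := by
    refine abs_integral_sub_le' int_fg int_faga ?_
    intro x
    have e : f x * g (T t x) - fa ε x * ga ε (T t x)
        = (f x - fa ε x) * g (T t x) + fa ε x * (g (T t x) - ga ε (T t x)) := by ring
    rw [e]
    calc |(f x - fa ε x) * g (T t x) + fa ε x * (g (T t x) - ga ε (T t x))|
        ≤ |(f x - fa ε x) * g (T t x)| + |fa ε x * (g (T t x) - ga ε (T t x))| :=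
          abs_add_le _ _
      _ = |f x - fa ε x| * |g (T t x)| + |fa ε x| * |g (T t x) - ga ε (T t x)| := by
          rw [abs_mul, abs_mul]
      _ ≤ (C₁ * ε ^ θ) * C₁ + (2 * C₁) * (C₁ * ε ^ θ) := by
          have e1 := mul_le_mul (hf1 x) (hgb (T t x)) (abs_nonneg _) (by positivity)
          have e2 := mul_le_mul (hfab x) (hg1 (T t x)) (abs_nonneg _) (by positivity)
          linarith
      _ = 3 * (C₁ * C₁) * ε ^ θ := by ring
  -- term 3
  have hIfa : |∫ x, fa ε x ∂μ| ≤ 2 * C₁ := abs_integral_le' hfab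
  have hIg : |∫ x, g x ∂μ| ≤ C₁ := abs_integral_le' hgb
  have hdf : |(∫ x, fa ε x ∂μ) - ∫ x, f x ∂μ| ≤ C₁ * ε ^ θ := by
    refine abs_integral_sub_le' int_fa int_f ?_
    intro x; rw [abs_sub_comm]; exact hf1 x
  have hdg : |(∫ x, ga ε x ∂μ) - ∫ x, g x ∂μ| ≤ C₁ * ε ^ θ := by
    refine abs_integral_sub_le' int_ga int_g ?_
    intro x; rw [abs_sub_comm]; exact hg1 x
  have h3 : |(∫ x, fa ε x ∂μ) * (∫ x, ga ε x ∂μ) - (∫ x, f x ∂μ) * (∫ x, g x ∂μ)|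
      ≤ 3 * (C₁ * C₁) * ε ^ θ := by
    set If := ∫ x, f x ∂μ
    set Ig := ∫ x, g x ∂μ
    set Ifa := ∫ x, fa ε x ∂μ
    set Iga := ∫ x, ga ε x ∂μ
    have e : Ifa * Iga - If * Ig = Ifa * (Iga - Ig) + (Ifa - If) * Ig := by ring
    rw [e]
    calc |Ifa * (Iga - Ig) + (Ifa - If) * Ig|
        ≤ |Ifa * (Iga - Ig)| + |(Ifa - If) * Ig| := abs_add_le _ _
      _ = |Ifa| * |Iga - Ig| + |Ifa - If| * |Ig| := by rw [abs_mul, abs_mul]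
      _ ≤ (2 * C₁) * (C₁ * ε ^ θ) + (C₁ * ε ^ θ) * C₁ := by
          have e1 := mul_le_mul hIfa hdg (abs_nonneg _) (by positivity)
          have e2 := mul_le_mul hdf hIg (abs_nonneg _) (by positivity)
          linarith
      _ = 3 * (C₁ * C₁) * ε ^ θ := by ring
  -- middle term
  have hN1 : 0 ≤ Nstar (fa ε) := (abs_nonneg _).trans (hf3 Classical.ofNonempty)
  have hN2 : 0 ≤ Nstar (ga ε) := (abs_nonneg _).trans (hg3 Classical.ofNonempty)
  have h2 : |(∫ x, fa ε x * ga ε (T t x) ∂μ)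
      - (∫ x, fa ε x ∂μ) * (∫ x, ga ε x ∂μ)| ≤ C₃ * C₂ * C₂ * E := by
    calc |(∫ x, fa ε x * ga ε (T t x) ∂μ) - (∫ x, fa ε x ∂μ) * (∫ x, ga ε x ∂μ)|
        ≤ C₃ * Nstar (fa ε) * Nstar (ga ε) * Real.exp (-η * t) := hmix ε hεIoo t ht
      _ ≤ C₃ * (C₂ * ε ^ (-k)) * (C₂ * ε ^ (-k)) * Real.exp (-η * t) := by
          gcongr
      _ = C₃ * C₂ * C₂ * (ε ^ (-k) * ε ^ (-k) * Real.exp (-η * t)) := by ring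
      _ = C₃ * C₂ * C₂ * E := by rw [hE2]
  -- combine
  have tri : |(∫ x, f x * g (T t x) ∂μ) - (∫ x, f x ∂μ) * (∫ x, g x ∂μ)|
      ≤ |(∫ x, f x * g (T t x) ∂μ) - ∫ x, fa ε x * ga ε (T t x) ∂μ|
        + |(∫ x, fa ε x * ga ε (T t x) ∂μ) - (∫ x, fa ε x ∂μ) * (∫ x, ga ε x ∂μ)|
        + |(∫ x, fa ε x ∂μ) * (∫ x, ga ε x ∂μ) - (∫ x, f x ∂μ) * (∫ x, g x ∂μ)| := by
    have := abs_sub_le ((∫ x, f x * g (T t x) ∂μ)) ((∫ x, fa ε x * ga ε (T t x) ∂μ))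
      ((∫ x, f x ∂μ) * (∫ x, g x ∂μ))
    have := abs_sub_le ((∫ x, fa ε x * ga ε (T t x) ∂μ))
      ((∫ x, fa ε x ∂μ) * (∫ x, ga ε x ∂μ)) ((∫ x, f x ∂μ) * (∫ x, g x ∂μ))
    linarith
  rw [hE1] at h1 h3
  linarith [tri, h1, h2, h3]
end
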